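/- arXiv:1704.08042 — 2 statements merged into one kernel-verified Lean document; each statement's English description precedes it below -/
import Mathlib

section
/- Every automorphism of the ω-Lie algebra L₁ is an ω-automorphism: if σ : ℂ³ → ℂ³ is a ℂ-linear bijection with σ[u,v] = [σ(u),σ(v)] for all u,v ∈ ℂ³, then ω(σ(u),σ(v)) = ω(u,v) for all u,v ∈ ℂ³. Hence Aut_ω(L₁) = Aut(L₁). -/
noncomputable section

/-- The underlying space ℂ³ of the ω-Lie algebra L₁. -/
abbrev V3 : Type := Fin 3 → ℂ

/-- The basis vector x = e₁. -/
def vx : V3 := ![1, 0, 0]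

/-- The basis vector y = e₂. -/
def vy : V3 := ![0, 1, 0]

/-- The basis vector z = e₃. -/
def vz : V3 := ![0, 0, 1]

/-!
Skew-symmetry determines the bracket: `[u,v] = ω(u,v) y + c(u,v) z`, so `ω(u,v)` is the
`y`-coordinate of `[u,v]`. An automorphism `σ` maps `y = [x,y]` and `z = [y,z]` into the derived
algebra `span {y, z}`; comparing coordinates in `σ z = [σ y, σ z]`, using `σ z ≠ 0`, shows that
the `y`-coordinates of `σ y` and `σ z` are `1` and `0`. Hence `σ` preserves the `y`-coordinate
of every bracket, i.e. `ω(σ u, σ v) = ω(u, v)`.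
-/

theorem eq_sum_coord_smul (u : V3) : u = u 0 • vx + u 1 • vy + u 2 • vz := by
  funext i; fin_cases i <;> simp [vx, vy, vz]

theorem skew_bilin_apply {M : Type*} [AddCommGroup M] [Module ℂ M]
    (f : V3 →ₗ[ℂ] V3 →ₗ[ℂ] M) (hf : ∀ u v, f u v = - f v u) (u v : V3) :
    f u v = (u 0 * v 1 - u 1 * v 0) • f vx vy + (u 0 * v 2 - u 2 * v 0) • f vx vz
      + (u 1 * v 2 - u 2 * v 1) • f vy vz := by
  have hself : ∀ a, f a a = 0 := fun a => by
    have h2 : (2 : ℂ) • f a a = 0 := by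
      rw [two_smul]; nth_rewrite 2 [hf]; exact add_neg_cancel _
    exact (smul_eq_zero.mp h2).resolve_left two_ne_zero
  conv_lhs => rw [eq_sum_coord_smul u, eq_sum_coord_smul v]
  simp only [map_add, map_smul, LinearMap.add_apply, LinearMap.smul_apply, hself,
    hf vy vx, hf vz vx, hf vz vy]
  module

structure IsL1Bracket (b : V3 →ₗ[ℂ] V3 →ₗ[ℂ] V3) : Prop where
  skew : ∀ u v, b u v = - b v u
  xy : b vx vy = vy
  xz : b vx vz = 0
  yz : b vy vz = vz

namespace IsL1Bracket

variable {b : V3 →ₗ[ℂ] V3 →ₗ[ℂ] V3}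

theorem apply (hb : IsL1Bracket b) (u v : V3) :
    b u v = (u 0 * v 1 - u 1 * v 0) • vy + (u 1 * v 2 - u 2 * v 1) • vz := by
  rw [skew_bilin_apply b hb.skew, hb.xy, hb.xz, hb.yz, smul_zero, add_zero]

theorem apply_zero (hb : IsL1Bracket b) (u v : V3) : b u v 0 = 0 := by
  simp [hb.apply, vy, vz]

theorem apply_one (hb : IsL1Bracket b) (u v : V3) : b u v 1 = u 0 * v 1 - u 1 * v 0 := by
  simp [hb.apply, vy, vz]

theorem apply_two (hb : IsL1Bracket b) (u v : V3) : b u v 2 = u 1 * v 2 - u 2 * v 1 := by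
  simp [hb.apply, vy, vz]

section Automorphism

variable (σ : V3 ≃ₗ[ℂ] V3)

theorem equiv_vy_apply_zero (hb : IsL1Bracket b) (hσ : ∀ u v, σ (b u v) = b (σ u) (σ v)) :
    σ vy 0 = 0 := by
  rw [← hb.xy, hσ, hb.apply_zero]

theorem equiv_vz_apply_zero (hb : IsL1Bracket b) (hσ : ∀ u v, σ (b u v) = b (σ u) (σ v)) :
    σ vz 0 = 0 := by
  rw [← hb.yz, hσ, hb.apply_zero]

theorem equiv_vz_apply_one (hb : IsL1Bracket b) (hσ : ∀ u v, σ (b u v) = b (σ u) (σ v)) :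
    σ vz 1 = 0 := by
  conv_lhs => rw [← hb.yz, hσ, hb.apply_one]
  rw [hb.equiv_vy_apply_zero σ hσ, hb.equiv_vz_apply_zero σ hσ]
  ring

theorem equiv_vy_apply_one (hb : IsL1Bracket b) (hσ : ∀ u v, σ (b u v) = b (σ u) (σ v)) :
    σ vy 1 = 1 := by
  have hz2 : σ vz 2 = σ vy 1 * σ vz 2 := by
    conv_lhs => rw [← hb.yz, hσ, hb.apply_two]
    rw [hb.equiv_vz_apply_one σ hσ]
    ring
  have hz2_ne : σ vz 2 ≠ 0 := by
    intro h
    have hz : σ vz = 0 := by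
      funext i
      fin_cases i
      exacts [hb.equiv_vz_apply_zero σ hσ, hb.equiv_vz_apply_one σ hσ, h]
    simpa [vz] using congrFun (σ.map_eq_zero_iff.mp hz) 2
  exact (mul_eq_right₀ hz2_ne).mp hz2.symm

theorem equiv_map_apply_one (hb : IsL1Bracket b) (hσ : ∀ u v, σ (b u v) = b (σ u) (σ v))
    (u v : V3) : σ (b u v) 1 = b u v 1 := by
  rw [hb.apply_one, hb.apply, map_add, map_smul, map_smul, Pi.add_apply, Pi.smul_apply,
    Pi.smul_apply, hb.equiv_vy_apply_one σ hσ, hb.equiv_vz_apply_one σ hσ]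
  simp

end Automorphism

end IsL1Bracket

theorem omega_eq_bracket_apply_one {b : V3 →ₗ[ℂ] V3 →ₗ[ℂ] V3} (hb : IsL1Bracket b)
    {w : V3 →ₗ[ℂ] V3 →ₗ[ℂ] ℂ} (hwskew : ∀ u v, w u v = - w v u)
    (hwxy : w vx vy = 1) (hwxz : w vx vz = 0) (hwyz : w vy vz = 0) (u v : V3) :
    w u v = b u v 1 := by
  rw [skew_bilin_apply w hwskew, hwxy, hwxz, hwyz, hb.apply_one]
  simp

/-- Every automorphism of the ω-Lie algebra L₁ (with `[x,y] = y`,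
`[x,z] = 0`, `[y,z] = z`, `ω(x,y) = 1`, `ω(x,z) = ω(y,z) = 0`) is an ω-automorphism;
hence `Aut_ω(L₁) = Aut(L₁)`. -/
theorem every_automorphism_of_L1_is_omega_automorphism
    (b : V3 →ₗ[ℂ] V3 →ₗ[ℂ] V3) (w : V3 →ₗ[ℂ] V3 →ₗ[ℂ] ℂ)
    (hskew : ∀ u v : V3, b u v = - b v u)
    (hwskew : ∀ u v : V3, w u v = - w v u)
    (hxy : b vx vy = vy) (hxz : b vx vz = 0) (hyz : b vy vz = vz)
    (hwxy : w vx vy = 1) (hwxz : w vx vz = 0) (hwyz : w vy vz = 0)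
    (σ : V3 ≃ₗ[ℂ] V3)
    (hσ : ∀ u v : V3, σ (b u v) = b (σ u) (σ v)) :
    ∀ u v : V3, w (σ u) (σ v) = w u v := by
  have hb : IsL1Bracket b := ⟨hskew, hxy, hxz, hyz⟩
  intro u v
  rw [omega_eq_bracket_apply_one hb hwskew hwxy hwxz hwyz,
    omega_eq_bracket_apply_one hb hwskew hwxy hwxz hwyz, ← hσ, hb.equiv_map_apply_one σ hσ]
end
end

section
/- For the ω-Lie algebra B, the exponential image of the derivation algebra is a proper subset of the automorphism group: there exists an automorphism σ of B (for instance the linear map with σ(x) = x, σ(y) = −y, σ(z) = a·y − z for some a ∈ ℂ) such that σ ≠ exp(d) for every derivation d of B. (Here derivations and automorphisms are identified with their 3×3 complex matrices relative to the basis x, y, z, and exp denotes the matrix exponential.) -/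
noncomputable section

/-- A 3×3 complex matrix is (identified with) a derivation of the bracket `b`. -/
def IsDerMat (b : V3 →ₗ[ℂ] V3 →ₗ[ℂ] V3) (A : Matrix (Fin 3) (Fin 3) ℂ) : Prop :=
  ∀ u v : V3,
    Matrix.toLin' A (b u v) = b (Matrix.toLin' A u) v + b u (Matrix.toLin' A v)

/-- A 3×3 complex matrix is (identified with) an automorphism of the bracket `b`. -/
def IsAutMat (b : V3 →ₗ[ℂ] V3 →ₗ[ℂ] V3) (A : Matrix (Fin 3) (Fin 3) ℂ) : Prop :=
  Function.Bijective (Matrix.toLin' A) ∧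
    ∀ u v : V3, Matrix.toLin' A (b u v) = b (Matrix.toLin' A u) (Matrix.toLin' A v)

/-!
Solving the derivation equations on the basis shows that every derivation of `B` is
`x, y ↦ 0, z ↦ c y`, a square-zero matrix. Hence `exp d = 1 + d` is unipotent, and an
automorphism by direct computation, whereas the automorphism `x ↦ x, y ↦ -y, z ↦ -z` has
eigenvalue `-1`.
-/

open Matrix

theorem NormedSpace.exp_eq_one_add_of_mul_self_eq_zero {𝔸 : Type*} [Ring 𝔸] [Algebra ℚ 𝔸]
    [TopologicalSpace 𝔸] [IsTopologicalRing 𝔸] {x : 𝔸} (hx : x * x = 0) :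
    NormedSpace.exp x = 1 + x := by
  have hpow : ∀ n, 2 ≤ n → x ^ n = 0 := fun n hn => by
    obtain ⟨m, rfl⟩ := Nat.exists_eq_add_of_le hn
    rw [pow_add, sq, hx, zero_mul]
  rw [NormedSpace.exp_eq_tsum_rat]
  dsimp only
  rw [tsum_eq_sum (s := Finset.range 2) fun n hn => by
    rw [hpow n (by simpa [Nat.lt_iff_add_one_le] using hn), smul_zero]]
  simp [Finset.sum_range_succ]

theorem LinearMap.IsAlt.ext_basis {ι R M N : Type*} [LinearOrder ι] [CommRing R]
    [AddCommGroup M] [Module R M] [AddCommGroup N] [Module R N] (e : Module.Basis ι R M)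
    {B B' : M →ₗ[R] M →ₗ[R] N} (hB : B.IsAlt) (hB' : B'.IsAlt)
    (h : ∀ i j, i < j → B (e i) (e j) = B' (e i) (e j)) : B = B' := by
  refine LinearMap.ext_basis e e fun i j => ?_
  rcases lt_trichotomy i j with hij | rfl | hji
  · exact h i j hij
  · rw [hB, hB']
  · rw [← hB.neg, ← hB'.neg, h j i hji]

/-- Every alternating bilinear map on `ℂ³` is a linear map applied to the cross product; the
columns of this matrix are `[y, z] = x`, `[z, x] = -(y + z)` and `[x, y] = y`. -/
def bracketB : V3 →ₗ[ℂ] V3 →ₗ[ℂ] V3 :=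
  crossProduct.compr₂ (Matrix.toLin' !![1, 0, 0; 0, -1, 1; 0, -1, 0])

theorem bracketB_isAlt : bracketB.IsAlt := fun u => by
  simp [bracketB, cross_self]

theorem bracketB_apply (u v : V3) : bracketB u v =
    ![u 1 * v 2 - u 2 * v 1, u 0 * v 1 - u 1 * v 0 + (u 0 * v 2 - u 2 * v 0),
      u 0 * v 2 - u 2 * v 0] := by
  ext i
  fin_cases i <;> simp [bracketB, cross_apply, mulVec, dotProduct, Fin.sum_univ_three]
  ring

theorem eq_bracketB (b : V3 →ₗ[ℂ] V3 →ₗ[ℂ] V3) (hskew : ∀ u v : V3, b u v = - b v u)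
    (hxy : b vx vy = vy) (hxz : b vx vz = vy + vz) (hyz : b vy vz = vx) : b = bracketB := by
  have hb : b.IsAlt := fun u => self_eq_neg.mp (hskew u u)
  have hbasis : ⇑(Pi.basisFun ℂ (Fin 3)) = ![vx, vy, vz] := by
    ext i j; fin_cases i <;> fin_cases j <;> simp [vx, vy, vz]
  refine hb.ext_basis (Pi.basisFun ℂ (Fin 3)) bracketB_isAlt fun i j hij => ?_
  rw [hbasis]
  fin_cases i <;> fin_cases j <;> simp at hij <;>
    simp only [Fin.zero_eta, Fin.mk_one, Fin.reduceFinMk, cons_val, hxy, hxz, hyz] <;>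
    ext k <;> fin_cases k <;> simp [bracketB_apply, vx, vy, vz]

theorem eq_single_of_isDerMat_bracketB {A : Matrix (Fin 3) (Fin 3) ℂ}
    (hA : IsDerMat bracketB A) : ∃ c, A = single 1 2 c := by
  have hxy := congrFun (hA vx vy)
  have hxz := congrFun (hA vx vz)
  have hyz := congrFun (hA vy vz)
  simp [bracketB_apply, vx, vy, vz, mulVec, dotProduct, Fin.sum_univ_three,
    Fin.forall_fin_succ] at hxy hxz hyz
  refine ⟨A 1 2, ?_⟩
  ext i j
  fin_cases i <;> fin_cases j <;> simp <;> grind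

theorem exp_eq_one_add_single_of_isDerMat_bracketB {A : Matrix (Fin 3) (Fin 3) ℂ}
    (hA : IsDerMat bracketB A) : ∃ c, NormedSpace.exp A = 1 + single 1 2 c := by
  obtain ⟨c, rfl⟩ := eq_single_of_isDerMat_bracketB hA
  exact ⟨c, NormedSpace.exp_eq_one_add_of_mul_self_eq_zero (by simp)⟩

theorem isAutMat_of_isUnit_det {b : V3 →ₗ[ℂ] V3 →ₗ[ℂ] V3} {M : Matrix (Fin 3) (Fin 3) ℂ}
    (hM : IsUnit M.det) (hb : ∀ u v, M *ᵥ b u v = b (M *ᵥ u) (M *ᵥ v)) : IsAutMat b M := by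
  rw [← isUnit_iff_isUnit_det] at hM
  exact ⟨⟨mulVec_injective_iff_isUnit.mpr hM, mulVec_surjective_iff_isUnit.mpr hM⟩, hb⟩

theorem isAutMat_bracketB_one_add_single (c : ℂ) : IsAutMat bracketB (1 + single 1 2 c) := by
  refine isAutMat_of_isUnit_det (by simp [det_fin_three, one_apply]) fun u v => ?_
  ext i
  fin_cases i <;>
    simp [bracketB_apply, add_mulVec, mulVec, dotProduct, Fin.sum_univ_three, one_apply] <;> ring

theorem isAutMat_bracketB_diagonal : IsAutMat bracketB (diagonal ![1, -1, -1]) := by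
  refine isAutMat_of_isUnit_det (by simp [Fin.prod_univ_three]) fun u v => ?_
  ext i
  fin_cases i <;> simp [bracketB_apply, mulVec_diagonal] <;> ring

/-- For the ω-Lie algebra B (with `[x,y] = y`, `[x,z] = y + z`,
`[y,z] = x`), the exponential image of the derivation algebra is a *proper* subset of the
automorphism group: the exponential of every derivation is an automorphism, but some
automorphism is not the exponential of any derivation. -/
theorem exp_derivations_proper_subset_of_automorphisms_B
    (b : V3 →ₗ[ℂ] V3 →ₗ[ℂ] V3)
    (hskew : ∀ u v : V3, b u v = - b v u)
    (hxy : b vx vy = vy) (hxz : b vx vz = vy + vz) (hyz : b vy vz = vx) :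
    (∀ A : Matrix (Fin 3) (Fin 3) ℂ, IsDerMat b A → IsAutMat b (NormedSpace.exp A)) ∧
    (∃ B : Matrix (Fin 3) (Fin 3) ℂ, IsAutMat b B ∧
      ∀ A : Matrix (Fin 3) (Fin 3) ℂ, IsDerMat b A → NormedSpace.exp A ≠ B) := by
  obtain rfl := eq_bracketB b hskew hxy hxz hyz
  refine ⟨fun A hA => ?_, diagonal ![1, -1, -1], isAutMat_bracketB_diagonal, fun A hA h => ?_⟩
  · obtain ⟨c, hc⟩ := exp_eq_one_add_single_of_isDerMat_bracketB hA
    exact hc ▸ isAutMat_bracketB_one_add_single c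
  · obtain ⟨c, hc⟩ := exp_eq_one_add_single_of_isDerMat_bracketB hA
    have h11 := congrFun₂ (hc.symm.trans h) 1 1
    norm_num [one_apply, single_apply, Fin.ext_iff] at h11
end
end
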